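/- Let 0 ≤ t < T, γ > 0, r > 0, σ_F > 0, μ_F ∈ ℝ, V̄ > 0, ψ > 0, and let z > 0 and f > 0 (the time-t values of the pricing kernel and of the fixed-term asset). Let G be a Gaussian random variable with mean 0 and variance T − t, and define Z_T := z · exp(−(r + γ²/2)(T − t) − γG) and F_T := f · h(t,T) · (Z_T/z)^(−σ_F/γ). Then the time-t replication value of the payoff (V̄ − ψ F_T)⁺ satisfies E[(Z_T/z) · max(V̄ − ψ F_T, 0)] = V̄ · z⁻¹ · ξ(T, t, z, 1, z·(ψ f h(t,T)/V̄)^(γ/σ_F), +∞) − ψ f h(t,T) · z^(σ_F/γ − 1) · ξ(T, t, z, 1 − σ_F/γ, z·(ψ f h(t,T)/V̄)^(γ/σ_F), +∞). -/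

import Mathlib

/-!
In the variable `x = -log (Z_T / z) = (r + γ²/2)(T - t) + γ G`, which is Gaussian with mean
`(r + γ²/2)(T - t)` and variance `γ²(T - t)`, the discounted payoff is
`e^{-x} (V̄ - ψ f h e^{q x})⁺` with `q = σ_F / γ`. It vanishes exactly for
`x > log (V̄ / (ψ f h)) / q`, so its expectation splits into two truncated moments
`𝔼[e^{-k x}; x ≤ x₀]` with `k = 1` and `k = 1 - q`. Exponential tilting by `e^{-k x}` shifts the
mean by `-k γ²(T - t)` and multiplies by the moment generating function, so each truncated
moment is a Gaussian moment times a value of `Φ`: these are the two `ξ` terms.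
-/

open MeasureTheory ProbabilityTheory

open scoped ENNReal

/-- Cumulative distribution function of the standard normal distribution. -/
noncomputable def Phi (x : ℝ) : ℝ := ((gaussianReal 0 1) (Set.Iic x)).toReal

/-- `Φ(d̄(x) + kγ√(s − t))`, where `d̄(x) = (ln(z/x) − (r + γ²/2)(s − t)) / (γ √(s − t))`
for `x ∈ (0, ∞)`, with the conventions `Φ(d̄(0) + u) = 1` and `Φ(d̄(∞) + u) = 0`. -/
noncomputable def PhiDbar (γ r s t z k : ℝ) (x : ℝ≥0∞) : ℝ :=
  if x = 0 then 1
  else if x = ⊤ then 0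
  else Phi ((Real.log (z / x.toReal) - (r + γ ^ 2 / 2) * (s - t)) / (γ * Real.sqrt (s - t))
      + k * γ * Real.sqrt (s - t))

/-- `ξ(s, t, z, k, a, b; γ, r)`. -/
noncomputable def xi (γ r s t z k : ℝ) (a b : ℝ≥0∞) : ℝ :=
  z ^ k * Real.exp (-k * (r + γ ^ 2 / 2) * (s - t) + k ^ 2 * γ ^ 2 / 2 * (s - t)) *
    (PhiDbar γ r s t z k a - PhiDbar γ r s t z k b) * (if a < b then 1 else 0)

/-- `h(t₁, t₂) = exp((μ_F − σ_F²/2 − σ_F r/γ − σ_F γ/2)(t₂ − t₁))`. -/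
noncomputable def hF (γ r μF σF t₁ t₂ : ℝ) : ℝ :=
  Real.exp ((μF - σF ^ 2 / 2 - σF * r / γ - σF * γ / 2) * (t₂ - t₁))

open Set Real
open scoped NNReal

namespace ProbabilityTheory

lemma gaussianPDFReal_mul_exp (μ : ℝ) (v : ℝ≥0) (β x : ℝ) :
    gaussianPDFReal μ v x * rexp (β * x)
      = rexp (β * μ + v * β ^ 2 / 2) * gaussianPDFReal (μ + v * β) v x := by
  rcases eq_or_ne v 0 with rfl | hv
  · simp
  simp only [gaussianPDFReal]
  rw [mul_assoc, ← Real.exp_add, mul_left_comm, ← Real.exp_add]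
  congr 2
  field_simp
  ring

lemma integral_exp_mul_mul_gaussianReal (μ : ℝ) (v : ℝ≥0) (β : ℝ) (g : ℝ → ℝ) :
    ∫ x, rexp (β * x) * g x ∂gaussianReal μ v
      = rexp (β * μ + v * β ^ 2 / 2) * ∫ x, g x ∂gaussianReal (μ + v * β) v := by
  rcases eq_or_ne v 0 with rfl | hv
  · simp
  simp only [integral_gaussianReal_eq_integral_smul hv, smul_eq_mul, ← mul_assoc,
    gaussianPDFReal_mul_exp, ← integral_const_mul]

lemma setIntegral_exp_mul_gaussianReal (μ : ℝ) (v : ℝ≥0) (β : ℝ) {s : Set ℝ}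
    (hs : MeasurableSet s) :
    ∫ x in s, rexp (β * x) ∂gaussianReal μ v
      = rexp (β * μ + v * β ^ 2 / 2) * (gaussianReal (μ + v * β) v).real s := by
  rw [← integral_indicator_one hs, ← integral_exp_mul_mul_gaussianReal, ← integral_indicator hs]
  congr 1 with x
  by_cases hx : x ∈ s <;> simp [hx]

lemma gaussianReal_map_const_add_mul (μ : ℝ) (v : ℝ≥0) (a b : ℝ) :
    (gaussianReal μ v).map (fun x ↦ a + b * x)
      = gaussianReal (a + b * μ) (.mk (b ^ 2) (sq_nonneg b) * v) := by
  rw [show (fun x ↦ a + b * x) = (a + ·) ∘ (b * ·) from rfl,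
    ← Measure.map_map (measurable_const_add a) (measurable_const_mul b),
    gaussianReal_map_const_mul, gaussianReal_map_const_add, add_comm]

lemma gaussianReal_real_Iic (μ : ℝ) {v : ℝ≥0} (hv : v ≠ 0) (x : ℝ) :
    (gaussianReal μ v).real (Iic x) = Phi ((x - μ) / √v) := by
  have hsqrt : 0 < √(v : ℝ) := Real.sqrt_pos.mpr (by positivity)
  have hstd : (gaussianReal 0 1).map (fun y ↦ μ + √v * y) = gaussianReal μ v := by
    rw [gaussianReal_map_const_add_mul, mul_zero, add_zero]
    congr
    ext
    simp
  rw [← hstd, map_measureReal_apply (by fun_prop) measurableSet_Iic, Phi, measureReal_def]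
  congr 2 with y
  simp [le_div_iff₀' hsqrt, le_sub_iff_add_le']

lemma setIntegral_Iic_exp_neg_mul_gaussianReal (μ : ℝ) {v : ℝ≥0} (hv : v ≠ 0) (k x₀ : ℝ) :
    ∫ x in Iic x₀, rexp (-k * x) ∂gaussianReal μ v
      = rexp (-k * μ + k ^ 2 * v / 2) * Phi ((x₀ - μ) / √v + k * √v) := by
  have hsqrt : √(v : ℝ) ≠ 0 := (Real.sqrt_pos.mpr (by positivity)).ne'
  rw [setIntegral_exp_mul_gaussianReal _ _ _ measurableSet_Iic, gaussianReal_real_Iic _ hv]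
  congr 2
  · ring
  · field_simp
    rw [Real.sq_sqrt v.coe_nonneg]
    ring

lemma integral_comp_const_add_mul_gaussianReal (μ : ℝ) (v : ℝ≥0) (a b : ℝ) {g : ℝ → ℝ}
    (hg : Measurable g) :
    ∫ x, g (a + b * x) ∂gaussianReal μ v
      = ∫ x, g x ∂gaussianReal (a + b * μ) (.mk (b ^ 2) (sq_nonneg b) * v) := by
  rw [← gaussianReal_map_const_add_mul, integral_map (by fun_prop) hg.aestronglyMeasurable]

end ProbabilityTheory

lemma exp_neg_mul_max_sub_eq_indicator {V A q : ℝ} (hV : 0 < V) (hA : 0 < A) (hq : 0 < q)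
    (x : ℝ) :
    rexp (-x) * max (V - A * rexp (q * x)) 0
      = (Iic (log (V / A) / q)).indicator
          (fun x ↦ V * rexp (-1 * x) - A * rexp (-(1 - q) * x)) x := by
  have hx : x ≤ log (V / A) / q ↔ A * rexp (q * x) ≤ V := by
    rw [le_div_iff₀ hq, mul_comm, ← exp_le_exp, exp_log (by positivity), le_div_iff₀' hA]
  by_cases hle : x ≤ log (V / A) / q
  · rw [indicator_of_mem (mem_Iic.mpr hle), max_eq_left (sub_nonneg.mpr (hx.mp hle)), mul_sub,
      mul_left_comm, ← exp_add]
    ring_nf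
  · rw [indicator_of_notMem (notMem_Iic.mpr (not_le.mp hle)),
      max_eq_right (sub_nonpos.mpr (not_le.mp (hx.not.mp hle)).le), mul_zero]

lemma integral_exp_neg_mul_max_sub_gaussianReal {V A q : ℝ} (hV : 0 < V) (hA : 0 < A)
    (hq : 0 < q) (μ : ℝ) (v : ℝ≥0) :
    ∫ x, rexp (-x) * max (V - A * rexp (q * x)) 0 ∂gaussianReal μ v
      = V * ∫ x in Iic (log (V / A) / q), rexp (-1 * x) ∂gaussianReal μ v
        - A * ∫ x in Iic (log (V / A) / q), rexp (-(1 - q) * x) ∂gaussianReal μ v := by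
  simp_rw [exp_neg_mul_max_sub_eq_indicator hV hA hq]
  rw [integral_indicator measurableSet_Iic, integral_sub, integral_const_mul, integral_const_mul]
  all_goals exact ((integrable_exp_mul_gaussianReal _).const_mul _).restrict

/-- With `x = -log (Z_s / z) ∼ 𝓝((r + γ²/2)(s - t), γ²(s - t))`, this says
`ξ(s, t, z, k, a, ∞) = 𝔼[Z_s ^ k ; Z_s ≥ a]`. -/
lemma xi_ofReal_top_eq_setIntegral {γ s t : ℝ} (hγ : 0 < γ) (hts : t < s) (r z k : ℝ) {a : ℝ}
    (ha : 0 < a) :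
    xi γ r s t z k (ENNReal.ofReal a) ⊤
      = z ^ k * ∫ x in Iic (log (z / a)), rexp (-k * x) ∂gaussianReal
          ((r + γ ^ 2 / 2) * (s - t)) (.mk (γ ^ 2) (sq_nonneg γ) * (s - t).toNNReal) := by
  have hst : 0 < s - t := sub_pos.mpr hts
  have hv : (.mk (γ ^ 2) (sq_nonneg γ) * (s - t).toNNReal : ℝ≥0) ≠ 0 := by
    rw [Ne, ← NNReal.coe_eq_zero, NNReal.coe_mul, NNReal.coe_mk, Real.coe_toNNReal _ hst.le]
    positivity
  rw [setIntegral_Iic_exp_neg_mul_gaussianReal _ hv]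
  simp only [xi, PhiDbar, ENNReal.ofReal_eq_zero, not_le.mpr ha, ENNReal.ofReal_ne_top,
    ENNReal.ofReal_lt_top, ENNReal.toReal_ofReal ha.le, NNReal.coe_mul, NNReal.coe_mk,
    Real.coe_toNNReal _ hst.le, Real.sqrt_mul (sq_nonneg γ), Real.sqrt_sq hγ.le,
    ENNReal.top_ne_zero, if_false, if_true, sub_zero, mul_one]
  rw [mul_assoc, mul_assoc k γ]
  congr 3
  ring

theorem put_on_fixed_term_asset_replication_value_at_t_general
    (T t γ r σF μF V ψ z f : ℝ)
    (htT : t < T) (hγ : 0 < γ) (hσF : 0 < σF)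
    (hV : 0 < V) (hψ : 0 < ψ) (hz : 0 < z) (hf : 0 < f) :
    (∫ w, Real.exp (-(r + γ ^ 2 / 2) * (T - t) - γ * w) *
        max (V - ψ * (f * hF γ r μF σF t T *
          (Real.exp (-(r + γ ^ 2 / 2) * (T - t) - γ * w)) ^ (-(σF / γ)))) 0
        ∂(gaussianReal 0 (Real.toNNReal (T - t))))
      = V * z⁻¹ * xi γ r T t z 1
            (ENNReal.ofReal (z * (ψ * f * hF γ r μF σF t T / V) ^ (γ / σF))) ⊤
        - ψ * f * hF γ r μF σF t T * z ^ (σF / γ - 1) * xi γ r T t z (1 - σF / γ)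
            (ENNReal.ofReal (z * (ψ * f * hF γ r μF σF t T / V) ^ (γ / σF))) ⊤ := by
  set A := ψ * f * hF γ r μF σF t T with hA_def
  set q := σF / γ with hq_def
  have hA : 0 < A := by
    have : 0 < hF γ r μF σF t T := Real.exp_pos _
    positivity
  have hlog : log (z / (z * (A / V) ^ (γ / σF))) = log (V / A) / q := by
    rw [div_mul_cancel_left₀ hz.ne', log_inv, log_rpow (by positivity),
      show log (V / A) = -log (A / V) by rw [← log_inv, inv_div], hq_def]
    field_simp
  have hintegrand : ∀ w, rexp (-(r + γ ^ 2 / 2) * (T - t) - γ * w) *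
        max (V - ψ * (f * hF γ r μF σF t T *
          (rexp (-(r + γ ^ 2 / 2) * (T - t) - γ * w)) ^ (-q))) 0
      = rexp (-((r + γ ^ 2 / 2) * (T - t) + γ * w))
        * max (V - A * rexp (q * ((r + γ ^ 2 / 2) * (T - t) + γ * w))) 0 := by
    intro w
    rw [← exp_mul, hA_def, hq_def]
    ring_nf
  have hz1 : z ^ (q - 1) * z ^ (1 - q) = 1 := by
    rw [← rpow_add hz]
    simp
  simp only [hintegrand]
  rw [integral_comp_const_add_mul_gaussianReal _ _ _ _
      (g := fun x ↦ rexp (-x) * max (V - A * rexp (q * x)) 0) (by fun_prop), mul_zero, add_zero,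
    integral_exp_neg_mul_max_sub_gaussianReal hV hA (by positivity),
    xi_ofReal_top_eq_setIntegral hγ htT _ _ _ (by positivity),
    xi_ofReal_top_eq_setIntegral hγ htT _ _ _ (by positivity), hlog, rpow_one,
    mul_assoc V, inv_mul_cancel_left₀ hz.ne', mul_assoc A, ← mul_assoc (z ^ (q - 1)), hz1, one_mul]

theorem put_on_fixed_term_asset_replication_value_at_t
    (T t γ r σF μF V ψ z f : ℝ)
    (ht : 0 ≤ t) (htT : t < T) (hγ : 0 < γ) (hr : 0 < r) (hσF : 0 < σF)
    (hV : 0 < V) (hψ : 0 < ψ) (hz : 0 < z) (hf : 0 < f) :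
    (∫ w, Real.exp (-(r + γ ^ 2 / 2) * (T - t) - γ * w) *
        max (V - ψ * (f * hF γ r μF σF t T *
          (Real.exp (-(r + γ ^ 2 / 2) * (T - t) - γ * w)) ^ (-(σF / γ)))) 0
        ∂(gaussianReal 0 (Real.toNNReal (T - t))))
      = V * z⁻¹ * xi γ r T t z 1
            (ENNReal.ofReal (z * (ψ * f * hF γ r μF σF t T / V) ^ (γ / σF))) ⊤
        - ψ * f * hF γ r μF σF t T * z ^ (σF / γ - 1) * xi γ r T t z (1 - σF / γ)
            (ENNReal.ofReal (z * (ψ * f * hF γ r μF σF t T / V) ^ (γ / σF))) ⊤ :=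
  put_on_fixed_term_asset_replication_value_at_t_general T t γ r σF μF V ψ z f htT hγ hσF hV hψ hz
    hf
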